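/- arXiv:2210.08943 — 3 statements merged into one kernel-verified Lean document; each statement's English description precedes it below -/
import Mathlib

section
/- Let p be an odd prime and ζ a primitive p-th root of unity, and for 0 ≤ l ≤ p - 1 set u_l = ζ^{-l} + ζ^{-l+2} + ... + ζ^{l} (so u_l = ∑_{i=0}^{l} ζ^{-l+2i}). Then for all 0 ≤ i ≤ j ≤ p - 2 with i + j < p - 2 we have u_i · u_j = u_{j-i} + u_{j-i+2} + ... + u_{i+j}. -/
/-!
Multiplying by `ζ - ζ⁻¹` telescopes the character `u_l` into `ζ ^ (l + 1) - ζ ^ (-(l + 1))`.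
After this multiplication both sides of the Clebsch–Gordan rule become
`∑ₘ ζ ^ (j - i + 2m + 1) - ∑ₘ ζ ^ (2m - i - j - 1)` (on the right after reflecting `t ↦ i - t`
in the second sum), and `ζ - ζ⁻¹ ≠ 0` because `ζ² ≠ 1` for a root of unity of odd prime order.
-/

open Finset

/-- The character of the irreducible `(l + 1)`-dimensional `sl₂`-module at `diag(ζ, ζ⁻¹)`;
this is the paper's `u_l`. -/
noncomputable def sl2Char {K : Type*} [Field K] (ζ : K) (l : ℕ) : K :=
  ∑ m ∈ range (l + 1), ζ ^ (2 * (m : ℤ) - l)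

section Field

variable {K : Type*} [Field K] {ζ : K}

theorem sl2Char_mul_sub_inv (hζ : ζ ≠ 0) (l : ℕ) :
    sl2Char ζ l * (ζ - ζ⁻¹) = ζ ^ ((l : ℤ) + 1) - ζ ^ (-(l : ℤ) - 1) := by
  have hstep : ∀ m : ℕ, ζ ^ (2 * (m : ℤ) - l) * (ζ - ζ⁻¹)
      = ζ ^ (2 * ((m + 1 : ℕ) : ℤ) - l - 1) - ζ ^ (2 * (m : ℤ) - l - 1) := by
    intro m
    rw [mul_sub, ← zpow_add_one₀ hζ, ← zpow_sub_one₀ hζ]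
    push_cast
    ring_nf
  rw [sl2Char, sum_mul, sum_congr rfl fun m _ => hstep m,
    sum_range_sub (fun m : ℕ => ζ ^ (2 * (m : ℤ) - l - 1))]
  push_cast
  ring_nf

theorem sl2Char_mul_sl2Char (hζ : ζ ≠ 0) (hζ2 : ζ ^ 2 ≠ 1) {i j : ℕ} (hij : i ≤ j) :
    sl2Char ζ i * sl2Char ζ j = ∑ t ∈ range (i + 1), sl2Char ζ (j - i + 2 * t) := by
  have hsub : ζ - ζ⁻¹ ≠ 0 := by
    rw [sub_ne_zero]
    contrapose! hζ2
    field_simp [hζ] at hζ2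
    exact hζ2
  apply mul_right_cancel₀ hsub
  rw [mul_assoc, sl2Char_mul_sub_inv hζ, sl2Char, sum_mul, sum_mul]
  simp_rw [sl2Char_mul_sub_inv hζ, Nat.cast_add, Nat.cast_sub hij, mul_sub, ← zpow_add₀ hζ,
    sum_sub_distrib]
  congr 1
  · refine sum_congr rfl fun m _ => ?_
    push_cast
    ring_nf
  · rw [← sum_range_reflect]
    refine sum_congr rfl fun m hm => ?_
    rw [Nat.cast_sub (by simpa [Nat.lt_succ_iff] using hm)]
    push_cast
    ring_nf

end Field

theorem stmt_15_general (p : ℕ) (hp : p.Prime) (hodd : Odd p) (ζ : ℂ)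
    (hζ : IsPrimitiveRoot ζ p) (u : ℕ → ℂ)
    (hu : ∀ l, u l = ∑ m ∈ Finset.range (l + 1), ζ ^ (2 * (m : ℤ) - (l : ℤ)))
    (i j : ℕ) (hij : i ≤ j) :
    u i * u j = ∑ t ∈ Finset.range (i + 1), u (j - i + 2 * t) := by
  obtain rfl : u = sl2Char ζ := funext hu
  have hp2 : 2 < p := by
    have := hp.two_le
    have := Nat.odd_iff.mp hodd
    omega
  exact sl2Char_mul_sl2Char (hζ.ne_zero hp.ne_zero)
    (hζ.pow_ne_one_of_pos_of_lt two_ne_zero hp2) hij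

theorem stmt_15 (p : ℕ) (hp : p.Prime) (hodd : Odd p) (ζ : ℂ)
    (hζ : IsPrimitiveRoot ζ p) (u : ℕ → ℂ)
    (hu : ∀ l, u l = ∑ m ∈ Finset.range (l + 1), ζ ^ (2 * (m : ℤ) - (l : ℤ)))
    (i j : ℕ) (hij : i ≤ j) (hj : j ≤ p - 2) (hlt : i + j < p - 2) :
    u i * u j = ∑ t ∈ Finset.range (i + 1), u (j - i + 2 * t) :=
  stmt_15_general p hp hodd ζ hζ u hu i j hij
end

section
/- Let p be an odd prime and ζ a primitive p-th root of unity, and for 0 ≤ l ≤ p - 1 set u_l = ∑_{m=0}^{l} ζ^{2m-l}. Then for every 0 ≤ l ≤ p - 2 we have u_l · u_{p-2} = u_{p-2-l}. -/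
theorem stmt_16 (p : ℕ) (hp : p.Prime) (hodd : Odd p) (ζ : ℂ)
    (hζ : IsPrimitiveRoot ζ p) (u : ℕ → ℂ)
    (hu : ∀ l, u l = ∑ m ∈ Finset.range (l + 1), ζ ^ (2 * (m : ℤ) - (l : ℤ)))
    (l : ℕ) (hl : l ≤ p - 2) :
    u l * u (p - 2) = u (p - 2 - l) := by
  have hmod : p % 2 = 1 := Nat.odd_iff.mp hodd
  have hp3 : 3 ≤ p := by have := hp.two_le; omega
  have hz0 : ζ ≠ 0 := hζ.ne_zero (by omega)
  have hzp : ζ ^ (p : ℤ) = 1 := by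
    rw [zpow_natCast]; exact hζ.pow_eq_one
  have hper : ∀ a : ℤ, ζ ^ (a + p) = ζ ^ a := by
    intro a; rw [zpow_add₀ hz0, hzp, mul_one]
  have h2 : ζ ^ 2 - 1 ≠ 0 := by
    intro h
    have h2' : ζ ^ 2 = 1 := by linear_combination h
    have : (p : ℕ) ∣ 2 := hζ.dvd_of_pow_eq_one 2 h2'
    have := Nat.le_of_dvd (by norm_num) this
    omega
  have key : ∀ k : ℕ, u k * (ζ ^ 2 - 1) = ζ ^ ((k : ℤ) + 2) - ζ ^ (-(k : ℤ)) := by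
    intro k
    rw [hu]
    have hterm : ∀ m ∈ Finset.range (k + 1),
        ζ ^ (2 * (m : ℤ) - (k : ℤ)) = ζ ^ (-(k : ℤ)) * (ζ ^ 2) ^ m := by
      intro m _
      rw [← zpow_natCast (ζ ^ 2) m, ← zpow_natCast ζ 2, ← zpow_mul, ← zpow_add₀ hz0]
      ring_nf
    rw [Finset.sum_congr rfl hterm, ← Finset.mul_sum, mul_assoc, geom_sum_mul, mul_sub, mul_one]
    congr 1
    rw [← pow_mul, ← zpow_natCast ζ (2 * (k + 1)), ← zpow_add₀ hz0]
    congr 1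
    push_cast
    ring
  have hcast : ((p - 2 : ℕ) : ℤ) = (p : ℤ) - 2 := by omega
  have hU : u (p - 2) = -1 := by
    have hk := key (p - 2)
    rw [hcast] at hk
    have e1 : (p : ℤ) - 2 + 2 = p := by ring
    have e2 : ζ ^ (-((p : ℤ) - 2)) = ζ ^ (2 : ℤ) := by
      rw [← hper (-((p : ℤ) - 2))]; congr 1; ring
    rw [e1, hzp, e2] at hk
    have : u (p - 2) * (ζ ^ 2 - 1) = (-1) * (ζ ^ 2 - 1) := by
      rw [hk]; rw [show ζ ^ (2:ℤ) = ζ ^ 2 from zpow_two ζ ▸ (sq ζ).symm ▸ rfl]; ring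
    exact mul_right_cancel₀ h2 this
  have hcast2 : ((p - 2 - l : ℕ) : ℤ) = (p : ℤ) - 2 - l := by omega
  have hV : u (p - 2 - l) = - u l := by
    have hk := key (p - 2 - l)
    have hk' := key l
    rw [hcast2] at hk
    have e1 : ζ ^ ((p : ℤ) - 2 - l + 2) = ζ ^ (-(l : ℤ)) := by
      rw [← hper (-(l:ℤ))]; congr 1; ring
    have e2 : ζ ^ (-((p : ℤ) - 2 - l)) = ζ ^ ((l : ℤ) + 2) := by
      rw [← hper (-((p : ℤ) - 2 - l))]; congr 1; ring
    rw [e1, e2] at hk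
    have : u (p - 2 - l) * (ζ ^ 2 - 1) = (- u l) * (ζ ^ 2 - 1) := by
      rw [hk]; linear_combination hk'
    exact mul_right_cancel₀ h2 this
  rw [hU, hV]; ring
end

section
/- Let p ≥ 5 be a prime, let 0 ≤ l ≤ p - 2 and let ν be a nonempty partition satisfying |ν| < p, ν_1 ≤ p - l - 2, and ℓ(ν) ≤ l. Define the fold of the multiset C_{l+1} of shifted contents of ν (each element c is replaced by min(c, p - c)). Then the multiplicity of 2 in this folded multiset equals the number of equalities that hold among the two conditions ℓ(ν) = l and ν_1 = p - l - 2 (i.e., it is 0, 1, or 2 accordingly). -/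
/-- With 0-indexed cells, the shifted content of cell `(i, j)` by `l + 1` is
`j - i + l + 1`; folding replaces `c` by `min c (p - c)`. -/
theorem stmt_19 (p l : ℕ) (hp : p.Prime) (hp5 : 5 ≤ p) (hl : l ≤ p - 2)
    (ν : YoungDiagram) (hne : ν.cells.Nonempty) (hsize : ν.cells.card < p)
    (hrow : ν.rowLen 0 ≤ p - l - 2) (hcol : ν.colLen 0 ≤ l) :
    (ν.cells.filter
        (fun c => min ((c.2 : ℤ) - c.1 + (l + 1))
            ((p : ℤ) - ((c.2 : ℤ) - c.1 + (l + 1))) = 2)).card =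
      (if ν.colLen 0 = l then 1 else 0) +
        (if ν.rowLen 0 = p - l - 2 then 1 else 0) := by
  classical
  have h00 : ((0 : ℕ), (0 : ℕ)) ∈ ν := by
    obtain ⟨c, hc⟩ := hne
    rw [YoungDiagram.mem_cells] at hc
    exact ν.up_left_mem (Nat.zero_le _) (Nat.zero_le _) (by simpa using hc)
  have hrl : 1 ≤ ν.rowLen 0 := YoungDiagram.mem_iff_lt_rowLen.mp h00
  have hcl : 1 ≤ ν.colLen 0 := YoungDiagram.mem_iff_lt_colLen.mp h00
  have hl1 : 1 ≤ l := le_trans hcl hcol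
  have hlp : l + 3 ≤ p := by omega
  have ha : ((l - 1, 0) ∈ ν) ↔ ν.colLen 0 = l := by
    rw [YoungDiagram.mem_iff_lt_colLen]; omega
  have hb : (((0 : ℕ), p - l - 3) ∈ ν) ↔ ν.rowLen 0 = p - l - 2 := by
    rw [YoungDiagram.mem_iff_lt_rowLen]; omega
  have hfilter : (ν.cells.filter
        (fun c => min ((c.2 : ℤ) - c.1 + (l + 1))
            ((p : ℤ) - ((c.2 : ℤ) - c.1 + (l + 1))) = 2)) =
      ν.cells ∩ {(l - 1, 0), (0, p - l - 3)} := by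
    ext ⟨i, j⟩
    simp only [Finset.mem_filter, Finset.mem_inter, Finset.mem_insert,
      Finset.mem_singleton, Prod.mk.injEq, YoungDiagram.mem_cells]
    refine and_congr_right fun hij => ?_
    have hi : i < ν.colLen 0 := YoungDiagram.mem_iff_lt_colLen.mp
      (ν.up_left_mem le_rfl (Nat.zero_le _) hij)
    have hj : j < ν.rowLen 0 := YoungDiagram.mem_iff_lt_rowLen.mp
      (ν.up_left_mem (Nat.zero_le _) le_rfl hij)
    have hi' : i < l := lt_of_lt_of_le hi hcol
    have hj' : j + l + 3 ≤ p := by omega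
    constructor
    · intro h
      have h2 : ((j : ℤ) - i + (l + 1) = 2) ∨ ((j : ℤ) - i + (l + 1) = p - 2) := by
        rcases min_cases ((j : ℤ) - i + (l + 1))
          ((p : ℤ) - ((j : ℤ) - i + (l + 1))) with ⟨he, _⟩ | ⟨he, _⟩ <;>
          rw [he] at h <;> omega
      rcases h2 with h2 | h2
      · left; constructor <;> omega
      · right; constructor <;> omega
    · rintro (⟨hi0, hj0⟩ | ⟨hi0, hj0⟩) <;> subst hi0 <;> subst hj0 <;>
        push_cast <;> rw [min_def] <;> split <;> omega
  rw [hfilter, Finset.inter_comm]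
  have hab : ((l - 1, (0 : ℕ)) : ℕ × ℕ) ≠ (0, p - l - 3) := by
    simp only [ne_eq, Prod.mk.injEq, not_and]; omega
  by_cases h1 : ν.colLen 0 = l <;> by_cases h2 : ν.rowLen 0 = p - l - 2 <;>
    simp only [h1, h2, if_true, if_false, if_pos, if_neg] <;>
    [skip; skip; skip; skip]
  · rw [Finset.insert_inter_of_mem (by simpa [YoungDiagram.mem_cells] using ha.mpr h1),
      Finset.singleton_inter_of_mem (by simpa [YoungDiagram.mem_cells] using hb.mpr h2)]
    rw [Finset.card_insert_of_notMem (by simpa using hab)]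
    simp
  · rw [Finset.insert_inter_of_mem (by simpa [YoungDiagram.mem_cells] using ha.mpr h1),
      Finset.singleton_inter_of_notMem (by simp [YoungDiagram.mem_cells, hb, h2])]
    simp
  · rw [Finset.insert_inter_of_notMem (by simp [YoungDiagram.mem_cells, ha, h1]),
      Finset.singleton_inter_of_mem (by simpa [YoungDiagram.mem_cells] using hb.mpr h2)]
    simp
  · rw [Finset.insert_inter_of_notMem (by simp [YoungDiagram.mem_cells, ha, h1]),
      Finset.singleton_inter_of_notMem (by simp [YoungDiagram.mem_cells, hb, h2])]
    simp
end
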